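/- The type B_∞ = ∀X ∀Y {(X → Y), (Y → X) → [(X → Y) ∧ (Y → X)]} is an infinite I-type, and Λ(B_∞) = { T_{i,j} : (i,j) ∈ ℕ² } where T_{i,j} = λx λy ⟨λu [(x)(y)]^i (x)u, λu [(y)(x)]^j (y)u⟩. -/

import Mathlib

set_option maxHeartbeats 1000000


/-- Untyped λ-terms in de Bruijn representation. -/
inductive Trm : Type
  | var : ℕ → Trm
  | app : Trm → Trm → Trm
  | lam : Trm → Trm
  deriving DecidableEq

namespace Trm

/-- The set of free variables of a term (as de Bruijn indices). -/
def fv : Trm → Set ℕ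
  | var n => {n}
  | app u v => fv u ∪ fv v
  | lam u => {n | n + 1 ∈ fv u}

/-- A term is closed if it has no free variables. -/
def Closed (t : Trm) : Prop := fv t = ∅

/-- λI-terms: abstraction is allowed only on variables occurring free in the body. -/
inductive IsLI : Trm → Prop
  | var (n : ℕ) : IsLI (var n)
  | app {u v : Trm} : IsLI u → IsLI v → IsLI (app u v)
  | lam {u : Trm} : IsLI u → 0 ∈ fv u → IsLI (lam u)

/-- Lifting of free variables ≥ d. -/
def lift (d : ℕ) : Trm → Trm
  | var n => if n < d then var n else var (n + 1)
  | app u v => app (lift d u) (lift d v)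
  | lam u => lam (lift (d + 1) u)

def liftTimes (k : ℕ) (t : Trm) : Trm := (lift 0)^[k] t

/-- Capture-avoiding substitution of the k-th free variable. -/
def subst : Trm → ℕ → Trm → Trm
  | var n, k, v => if n < k then var n else if n = k then liftTimes k v else var (n - 1)
  | app a b, k, v => app (subst a k v) (subst b k v)
  | lam a, k, v => lam (subst a (k + 1) v)

end Trm

/-- One step of β-reduction. -/
inductive Beta : Trm → Trm → Prop
  | beta {u v : Trm} : Beta (.app (.lam u) v) (u.subst 0 v)
  | appL {u u' v : Trm} : Beta u u' → Beta (.app u v) (.app u' v)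
  | appR {u v v' : Trm} : Beta v v' → Beta (.app u v) (.app u v')
  | lam {u u' : Trm} : Beta u u' → Beta (.lam u) (.lam u')

/-- One step of η-reduction: λx (u)x → u when x ∉ Fv(u). -/
inductive Eta : Trm → Trm → Prop
  | eta (u : Trm) : Eta (.lam (.app (u.lift 0) (.var 0))) u
  | appL {u u' v : Trm} : Eta u u' → Eta (.app u v) (.app u' v)
  | appR {u v v' : Trm} : Eta v v' → Eta (.app u v) (.app u v')
  | lam {u u' : Trm} : Eta u u' → Eta (.lam u) (.lam u')

/-- β-reduction (reflexive-transitive closure). -/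
def BetaStar : Trm → Trm → Prop := Relation.ReflTransGen Beta

/-- βη-reduction (reflexive-transitive closure of the union of β and η). -/
def BetaEtaStar : Trm → Trm → Prop := Relation.ReflTransGen (fun a b => Beta a b ∨ Eta a b)

/-- η-reduction (reflexive-transitive closure). -/
def EtaStar : Trm → Trm → Prop := Relation.ReflTransGen Eta

/-- A term is β-normal iff it contains no β-redex. -/
def BetaNormal (t : Trm) : Prop := ∀ u, ¬ Beta t u

/-- A term is βη-normal iff it contains neither a β-redex nor an η-redex. -/
def BetaEtaNormal (t : Trm) : Prop := ∀ u, ¬ Beta t u ∧ ¬ Eta t u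

/-- A term is strongly normalizable iff every β-reduction sequence from it is finite. -/
def StronglyNormalizable (t : Trm) : Prop :=
  ¬ ∃ f : ℕ → Trm, f 0 = t ∧ ∀ n, Beta (f n) (f (n + 1))

/-- Types of system F in de Bruijn representation. -/
inductive Ty : Type
  | var : ℕ → Ty
  | arr : Ty → Ty → Ty
  | all : Ty → Ty
  deriving DecidableEq

namespace Ty

/-- Free type variables. -/
def tfv : Ty → Set ℕ
  | var n => {n}
  | arr A B => tfv A ∪ tfv B
  | all A => {n | n + 1 ∈ tfv A}

/-- Lifting of free type variables ≥ d. -/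
def tlift (d : ℕ) : Ty → Ty
  | var n => if n < d then var n else var (n + 1)
  | arr A B => arr (tlift d A) (tlift d B)
  | all A => all (tlift (d + 1) A)

def tliftTimes (k : ℕ) (A : Ty) : Ty := (tlift 0)^[k] A

/-- Substitution of the k-th free type variable. -/
def tsubst : Ty → ℕ → Ty → Ty
  | var n, k, G => if n < k then var n else if n = k then tliftTimes k G else var (n - 1)
  | arr A B, k, G => arr (tsubst A k G) (tsubst B k G)
  | all A, k, G => all (tsubst A (k + 1) G)

/-- Proper types: in every subtype ∀X E, the variable X occurs free in E. -/
def Proper : Ty → Prop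
  | var _ => True
  | arr A B => Proper A ∧ Proper B
  | all A => Proper A ∧ 0 ∈ tfv A

/-- Closed types. -/
def ClosedTy (A : Ty) : Prop := tfv A = ∅

end Ty

/-- Typing judgments of system F (restricted to proper types:
the rule (∀e) requires X free in A and instantiates at proper types only). -/
inductive Typing : List Ty → Trm → Ty → Prop
  | ax {Γ : List Ty} {n : ℕ} {A : Ty} :
      Γ[n]? = some A → (∀ B ∈ Γ, B.Proper) → Typing Γ (.var n) A
  | arrI {Γ : List Ty} {A B : Ty} {t : Trm} :
      A.Proper → Typing (A :: Γ) t B → Typing Γ (.lam t) (.arr A B)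
  | arrE {Γ : List Ty} {A B : Ty} {u v : Trm} :
      Typing Γ u (.arr A B) → Typing Γ v A → Typing Γ (.app u v) B
  | allI {Γ : List Ty} {A : Ty} {t : Trm} :
      0 ∈ Ty.tfv A → Typing (Γ.map (Ty.tlift 0)) t A → Typing Γ t (.all A)
  | allE {Γ : List Ty} {A : Ty} {t : Trm} (G : Ty) :
      G.Proper → 0 ∈ Ty.tfv A → Typing Γ t (.all A) → Typing Γ t (A.tsubst 0 G)

/-- A closed type D is an I-type iff every closed β-normal term of type D is a λI-term. -/
def IType (D : Ty) : Prop :=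
  Ty.ClosedTy D ∧ ∀ t : Trm, BetaNormal t → Trm.Closed t → Typing [] t D → Trm.IsLI t

/-- Λ(D): the set of closed βη-normal terms of type D. -/
def Lam (D : Ty) : Set Trm :=
  {t | BetaEtaNormal t ∧ Trm.Closed t ∧ Typing [] t D}

/-- A₁,...,Aₙ → C. -/
def arrList : List Ty → Ty → Ty
  | [], C => C
  | A :: As, C => .arr A (arrList As C)

/-- The n-ary conjunction A₁ ∧ ... ∧ Aₙ = ∀X {(A₁,...,Aₙ → X) → X} with X fresh. -/
def conjN (As : List Ty) : Ty :=
  .all (.arr (arrList (As.map (Ty.tlift 0)) (.var 0)) (.var 0))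

def allN : ℕ → Ty → Ty
  | 0, A => A
  | k + 1, A => .all (allN k A)

/-- Iterated application (t)u₁...uₙ. -/
def apps : Trm → List Trm → Trm
  | h, [] => h
  | h, t :: ts => apps (.app h t) ts

/-- The tuple ⟨t₁,...,tₙ⟩ = λx (x)t₁...tₙ with x fresh. -/
def tuple (ts : List Trm) : Trm := .lam (apps (.var 0) (ts.map (Trm.lift 0)))

def lamN : ℕ → Trm → Trm
  | 0, t => t
  | k + 1, t => .lam (lamN k t)

/-- B_∞ = ∀X ∀Y {(X → Y), (Y → X) → [(X → Y) ∧ (Y → X)]} (inside, X = var 1, Y = var 0). -/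
def Binf : Ty :=
  allN 2 (arrList [Ty.arr (.var 1) (.var 0), Ty.arr (.var 0) (.var 1)]
    (conjN [Ty.arr (.var 1) (.var 0), Ty.arr (.var 0) (.var 1)]))

/-- Body (x)((y)(...((z)u)...)) with n blocks (x)(y), then (z)u; x, y, z are de
Bruijn indices of the variables inside the abstraction λu. -/
def chainBody (x y z : ℕ) : ℕ → Trm
  | 0 => .app (.var z) (.var 0)
  | n + 1 => .app (.var x) (.app (.var y) (chainBody x y z n))

/-- λu [(x)(y)]ⁿ (z)u, in βη-normal form: for n = 0 it is the variable z itself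
(η-collapse of λu (z)u); indices x, y, z are taken outside the abstraction. -/
def chain (x y z : ℕ) : ℕ → Trm
  | 0 => .var z
  | n + 1 => .lam (chainBody (x + 1) (y + 1) (z + 1) (n + 1))

/-- T_{i,j} = λx λy ⟨λu [(x)(y)]^i (x)u, λu [(y)(x)]^j (y)u⟩ (with x = var 1, y = var 0). -/
def Tij (i j : ℕ) : Trm :=
  .lam (.lam (tuple [chain 1 0 1 i, chain 0 1 0 j]))


/-!
Realizability with saturated sets (sets of terms closed under β-expansion) is sound for system F,
so a closed inhabitant `t` of `B_∞` lies in its interpretation. Apply `t` to free variables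
`x, y, p` (de Bruijn `2, 1, 0`) and interpret `X` by the terms reducing to a word `[(y)(x)]ⁿ z`,
`Y` by those reducing to `(x)[(y)(x)]ⁿ z`: then `x` realizes `X → Y`, `y` realizes `Y → X`, and
`(t)x y p` reduces to some `(p)f g` with `(f)z ∈ Y`. For β-normal `t`, confluence forces
`t = λxλyλp (p)F G` with `f ↠ F`; so `(F)z ↠ (x)[(y)(x)]ⁿ z`, which leaves only `F = x` or
`F = λu [(x)(y)]ⁿ (x)u`. Exchanging the roles of `X` and `Y` pins down `G` in the same way. All
these are λI-terms, and βη-normality excludes exactly the η-redexes `λu (x)u` and `λu (y)u`.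
-/

namespace Trm

def upR (r : ℕ → ℕ) : ℕ → ℕ
  | 0 => 0
  | n + 1 => r n + 1

@[simp] def rename (r : ℕ → ℕ) : Trm → Trm
  | var n => var (r n)
  | app u v => app (rename r u) (rename r v)
  | lam u => lam (rename (upR r) u)

def upS (σ : ℕ → Trm) : ℕ → Trm
  | 0 => var 0
  | n + 1 => rename Nat.succ (σ n)

@[simp] def ssub (σ : ℕ → Trm) : Trm → Trm
  | var n => σ n
  | app u v => app (ssub σ u) (ssub σ v)
  | lam u => lam (ssub (upS σ) u)

theorem rename_rename (r s : ℕ → ℕ) (t : Trm) :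
    rename r (rename s t) = rename (r ∘ s) t := by
  induction t generalizing r s with
  | var n => rfl
  | app u v ihu ihv => simp [ihu, ihv]
  | lam u ih =>
    have h : upR r ∘ upR s = upR (r ∘ s) := by funext n; cases n <;> rfl
    simp [ih, h]

theorem ssub_rename (σ : ℕ → Trm) (r : ℕ → ℕ) (t : Trm) :
    ssub σ (rename r t) = ssub (σ ∘ r) t := by
  induction t generalizing σ r with
  | var n => rfl
  | app u v ihu ihv => simp [ihu, ihv]
  | lam u ih =>
    have h : upS σ ∘ upR r = upS (σ ∘ r) := by funext n; cases n <;> rfl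
    simp [ih, h]

theorem rename_ssub (r : ℕ → ℕ) (σ : ℕ → Trm) (t : Trm) :
    rename r (ssub σ t) = ssub (fun n => rename r (σ n)) t := by
  induction t generalizing σ r with
  | var n => rfl
  | app u v ihu ihv => simp [ihu, ihv]
  | lam u ih =>
    have h : (fun n => rename (upR r) (upS σ n)) = upS (fun n => rename r (σ n)) := by
      funext n
      cases n with
      | zero => rfl
      | succ n => simp only [upS, rename_rename]; rfl
    simp [ih, h]

theorem ssub_ssub (σ τ : ℕ → Trm) (t : Trm) :
    ssub σ (ssub τ t) = ssub (fun n => ssub σ (τ n)) t := by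
  induction t generalizing σ τ with
  | var n => rfl
  | app u v ihu ihv => simp [ihu, ihv]
  | lam u ih =>
    have h : (fun n => ssub (upS σ) (upS τ n)) = upS (fun n => ssub σ (τ n)) := by
      funext n
      cases n with
      | zero => rfl
      | succ n => simp only [upS, ssub_rename, rename_ssub]; rfl
    simp [ih, h]

@[simp] theorem ssub_var (t : Trm) : ssub var t = t := by
  induction t with
  | var n => rfl
  | app u v ihu ihv => simp [ihu, ihv]
  | lam u ih =>
    have h : upS var = var := by funext n; cases n <;> rfl
    simp [h, ih]

theorem rename_eq_ssub (r : ℕ → ℕ) (t : Trm) : rename r t = ssub (fun n => var (r n)) t := by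
  induction t generalizing r with
  | var n => rfl
  | app u v ihu ihv => simp [ihu, ihv]
  | lam u ih =>
    have h : (fun n => var (upR r n)) = upS (fun n => var (r n)) := by
      funext n; cases n <;> rfl
    simp [ih, h]

theorem ssub_congr_fv {σ τ : ℕ → Trm} {t : Trm} (h : ∀ n ∈ fv t, σ n = τ n) :
    ssub σ t = ssub τ t := by
  induction t generalizing σ τ with
  | var n => exact h n rfl
  | app u v ihu ihv =>
    simp only [ssub]
    rw [ihu fun n hn => h n (Or.inl hn), ihv fun n hn => h n (Or.inr hn)]
  | lam u ih =>
    simp only [ssub]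
    rw [ih]
    rintro (_ | n) hn
    · rfl
    · simp only [upS, h n hn]

theorem rename_eq_self {r : ℕ → ℕ} {t : Trm} (h : ∀ n ∈ fv t, r n = n) : rename r t = t := by
  rw [rename_eq_ssub, ← ssub_var t, ssub_congr_fv (τ := var) (by simpa using h), ssub_var]

theorem lift_eq_rename (d : ℕ) (t : Trm) :
    lift d t = rename (fun n => if n < d then n else n + 1) t := by
  induction t generalizing d with
  | var n => simp only [lift, rename]; split <;> rfl
  | app u v ihu ihv => simp [lift, ihu, ihv]
  | lam u ih =>
    have h : upR (fun n => if n < d then n else n + 1) =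
        fun n => if n < d + 1 then n else n + 1 := by
      funext n
      cases n with
      | zero => rfl
      | succ n => simp only [upR]; split <;> split <;> omega
    simp [lift, ih, h]

theorem liftTimes_eq_rename (k : ℕ) (t : Trm) : liftTimes k t = rename (· + k) t := by
  induction k with
  | zero => exact (rename_eq_self fun _ _ => rfl).symm
  | succ k ih =>
    rw [liftTimes, Function.iterate_succ_apply', ← liftTimes, ih, lift_eq_rename, rename_rename]
    congr 1

def substEnv (k : ℕ) (v : Trm) (n : ℕ) : Trm :=
  if n < k then var n else if n = k then liftTimes k v else var (n - 1)

theorem subst_eq_ssub (t : Trm) (k : ℕ) (v : Trm) : subst t k v = ssub (substEnv k v) t := by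
  induction t generalizing k with
  | var n => simp [subst, substEnv]
  | app u w ihu ihw => simp [subst, ihu, ihw]
  | lam u ih =>
    have h : substEnv (k + 1) v = upS (substEnv k v) := by
      funext n
      cases n with
      | zero => rfl
      | succ n =>
        simp only [substEnv, upS]
        rcases Nat.lt_trichotomy n k with hlt | rfl | hgt
        · simp [hlt]
        · simp only [lt_self_iff_false, ↓reduceIte, liftTimes_eq_rename, rename_rename]
          rfl
        · rw [if_neg (by omega), if_neg (by omega), if_neg (by omega), if_neg (by omega)]
          simp only [rename]
          congr 1
          omega
    simp [subst, ih, h]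

theorem subst_var_eq_rename (t : Trm) (k m : ℕ) :
    subst t k (var m) =
      rename (fun n => if n < k then n else if n = k then m + k else n - 1) t := by
  rw [subst_eq_ssub, rename_eq_ssub]
  congr 1
  funext n
  simp only [substEnv, liftTimes_eq_rename, rename]
  split_ifs <;> rfl

theorem rename_subst_zero (r : ℕ → ℕ) (u v : Trm) :
    rename r (subst u 0 v) = subst (rename (upR r) u) 0 (rename r v) := by
  rw [subst_eq_ssub, subst_eq_ssub, rename_ssub, ssub_rename]
  apply ssub_congr_fv
  rintro (_ | n) _ <;> rfl

theorem ssub_subst_zero (σ : ℕ → Trm) (u v : Trm) :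
    subst (ssub (upS σ) u) 0 (ssub σ v) = ssub σ (subst u 0 v) := by
  rw [subst_eq_ssub, subst_eq_ssub, ssub_ssub, ssub_ssub]
  apply ssub_congr_fv
  rintro (_ | n) _
  · rfl
  · simp only [upS, ssub_rename]
    exact ssub_var (σ n)

end Trm

namespace BetaStar

theorem appL {u u' v : Trm} (h : BetaStar u u') : BetaStar (.app u v) (.app u' v) :=
  Relation.ReflTransGen.lift (fun x => Trm.app x v) (fun _ _ h => Beta.appL h) _ _ h

theorem appR {u v v' : Trm} (h : BetaStar v v') : BetaStar (.app u v) (.app u v') :=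
  Relation.ReflTransGen.lift (Trm.app u) (fun _ _ h => Beta.appR h) _ _ h

theorem lam {u u' : Trm} (h : BetaStar u u') : BetaStar (.lam u) (.lam u') :=
  Relation.ReflTransGen.lift Trm.lam (fun _ _ h => Beta.lam h) _ _ h

theorem app {u u' v v' : Trm} (hu : BetaStar u u') (hv : BetaStar v v') :
    BetaStar (.app u v) (.app u' v') :=
  hu.appL.trans hv.appR

end BetaStar

inductive Par : Trm → Trm → Prop
  | var (n : ℕ) : Par (.var n) (.var n)
  | app {u u' v v' : Trm} : Par u u' → Par v v' → Par (.app u v) (.app u' v')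
  | lam {u u' : Trm} : Par u u' → Par (.lam u) (.lam u')
  | beta {u u' v v' : Trm} : Par u u' → Par v v' → Par (.app (.lam u) v) (u'.subst 0 v')

namespace Par

theorem refl : ∀ t : Trm, Par t t
  | .var n => .var n
  | .app u v => .app (refl u) (refl v)
  | .lam u => .lam (refl u)

theorem of_beta {t u : Trm} (h : Beta t u) : Par t u := by
  induction h with
  | beta => exact .beta (refl _) (refl _)
  | appL _ ih => exact .app ih (refl _)
  | appR _ ih => exact .app (refl _) ih
  | lam _ ih => exact .lam ih

theorem betaStar {t u : Trm} (h : Par t u) : BetaStar t u := by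
  induction h with
  | var => exact .refl
  | app _ _ ih₁ ih₂ => exact ih₁.app ih₂
  | lam _ ih => exact ih.lam
  | beta _ _ ih₁ ih₂ => exact (ih₁.lam.app ih₂).tail .beta

theorem rename {t t' : Trm} (r : ℕ → ℕ) (h : Par t t') : Par (t.rename r) (t'.rename r) := by
  induction h generalizing r with
  | var n => exact .var _
  | app _ _ ih₁ ih₂ => exact .app (ih₁ r) (ih₂ r)
  | lam _ ih => exact .lam (ih _)
  | beta _ _ ih₁ ih₂ =>
    rw [Trm.rename_subst_zero]
    exact .beta (ih₁ _) (ih₂ r)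

theorem ssub {t t' : Trm} {σ σ' : ℕ → Trm} (h : Par t t') (hσ : ∀ n, Par (σ n) (σ' n)) :
    Par (t.ssub σ) (t'.ssub σ') := by
  have up : ∀ {σ σ' : ℕ → Trm}, (∀ n, Par (σ n) (σ' n)) →
      ∀ n, Par (Trm.upS σ n) (Trm.upS σ' n) := by
    intro σ σ' hσ n
    cases n with
    | zero => exact .var 0
    | succ n => exact (hσ n).rename Nat.succ
  induction h generalizing σ σ' with
  | var n => exact hσ n
  | app _ _ ih₁ ih₂ => exact .app (ih₁ hσ) (ih₂ hσ)
  | lam _ ih => exact .lam (ih (up hσ))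
  | beta _ _ ih₁ ih₂ =>
    rw [← Trm.ssub_subst_zero]
    exact .beta (ih₁ (up hσ)) (ih₂ hσ)

theorem subst_zero {a a' b b' : Trm} (ha : Par a a') (hb : Par b b') :
    Par (a.subst 0 b) (a'.subst 0 b') := by
  rw [Trm.subst_eq_ssub, Trm.subst_eq_ssub]
  refine ha.ssub fun n => ?_
  cases n with
  | zero => exact hb
  | succ n => exact .var n

end Par

def completeDev : Trm → Trm
  | .var n => .var n
  | .lam u => .lam (completeDev u)
  | .app (.lam u) v => (completeDev u).subst 0 (completeDev v)
  | .app (.var n) v => .app (.var n) (completeDev v)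
  | .app (.app a b) v => .app (completeDev (.app a b)) (completeDev v)

theorem Par.to_completeDev {t s : Trm} (h : Par t s) : Par s (completeDev t) := by
  induction h with
  | var n => exact .var n
  | lam _ ih => exact .lam ih
  | @app u u' v v' h₁ _ ih₁ ih₂ =>
    cases u with
    | var n =>
      cases h₁
      exact .app (.var n) ih₂
    | app a b => exact .app ih₁ ih₂
    | lam u₀ =>
      cases h₁ with
      | lam _ =>
        cases ih₁ with
        | lam h' => exact .beta h' ih₂
  | beta _ _ ih₁ ih₂ => exact .subst_zero ih₁ ih₂

theorem BetaStar.confluent {t u v : Trm} (h₁ : BetaStar t u) (h₂ : BetaStar t v) :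
    ∃ w, BetaStar u w ∧ BetaStar v w := by
  have toPar : ∀ {a b : Trm}, BetaStar a b → Relation.ReflTransGen Par a b :=
    fun h => Relation.ReflTransGen.mono (fun _ _ => Par.of_beta) _ _ h
  have ofPar : ∀ {a b : Trm}, Relation.ReflTransGen Par a b → BetaStar a b := by
    intro a b h
    induction h with
    | refl => exact .refl
    | tail _ hp ih => exact ih.trans hp.betaStar
  obtain ⟨w, hw₁, hw₂⟩ := Relation.church_rosser
    (fun a _ _ hab hac => ⟨completeDev a, .single hab.to_completeDev,
      .single hac.to_completeDev⟩) (toPar h₁) (toPar h₂)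
  exact ⟨w, ofPar hw₁, ofPar hw₂⟩

theorem BetaNormal.eq_of_betaStar {t u : Trm} (h : BetaNormal t) (hs : BetaStar t u) : u = t := by
  induction hs using Relation.ReflTransGen.head_induction_on with
  | refl => rfl
  | head hstep _ _ => exact absurd hstep (h _)

theorem BetaStar.to_normal {t u v : Trm} (hu : BetaStar t u) (hv : BetaStar t v)
    (hn : BetaNormal v) : BetaStar u v := by
  obtain ⟨w, hw₁, hw₂⟩ := hu.confluent hv
  rwa [hn.eq_of_betaStar hw₂] at hw₁

theorem betaNormal_var (n : ℕ) : BetaNormal (.var n) := fun _ h => nomatch h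

theorem betaNormal_app_iff {u v : Trm} :
    BetaNormal (.app u v) ↔ BetaNormal u ∧ BetaNormal v ∧ ∀ w, u ≠ .lam w := by
  refine ⟨fun h => ⟨fun s hs => h _ hs.appL, fun s hs => h _ hs.appR, ?_⟩, ?_⟩
  · rintro w rfl
    exact h _ .beta
  · rintro ⟨hu, hv, hnl⟩ s hs
    cases hs with
    | beta => exact hnl _ rfl
    | appL h => exact hu _ h
    | appR h => exact hv _ h

theorem betaNormal_lam_iff {u : Trm} : BetaNormal (.lam u) ↔ BetaNormal u := by
  refine ⟨fun h s hs => h _ hs.lam, fun h s hs => ?_⟩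
  cases hs with
  | lam hs => exact h _ hs

theorem betaNormal_rename {t : Trm} (h : BetaNormal t) (r : ℕ → ℕ) :
    BetaNormal (t.rename r) := by
  induction t generalizing r with
  | var n => exact betaNormal_var _
  | app u v ihu ihv =>
    obtain ⟨hu, hv, hnl⟩ := betaNormal_app_iff.1 h
    refine betaNormal_app_iff.2 ⟨ihu hu r, ihv hv r, fun w hw => ?_⟩
    cases u <;> simp_all
  | lam u ih => exact betaNormal_lam_iff.2 (ih (betaNormal_lam_iff.1 h) _)

theorem betaNormal_subst_var {t : Trm} (h : BetaNormal t) (k m : ℕ) :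
    BetaNormal (t.subst k (.var m)) := by
  rw [Trm.subst_var_eq_rename]
  exact betaNormal_rename h _

theorem BetaStar.eq_app_app_var {p : ℕ} {f g w : Trm}
    (h : BetaStar (.app (.app (.var p) f) g) w) :
    ∃ f' g', w = .app (.app (.var p) f') g' ∧ BetaStar f f' ∧ BetaStar g g' := by
  induction h with
  | refl => exact ⟨f, g, rfl, .refl, .refl⟩
  | tail _ hstep ih =>
    obtain ⟨f', g', rfl, hf, hg⟩ := ih
    cases hstep with
    | appL h' =>
      cases h' with
      | appL h'' => nomatch h''
      | appR h'' => exact ⟨_, g', rfl, hf.tail h'', hg⟩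
    | appR h' => exact ⟨f', _, rfl, hf, hg.tail h'⟩

def Saturated (S : Set Trm) : Prop := ∀ ⦃u v⦄, Beta u v → v ∈ S → u ∈ S

def consEnv {α : Type*} (a : α) (ρ : ℕ → α) : ℕ → α
  | 0 => a
  | n + 1 => ρ n

@[simp] theorem consEnv_succ {α : Type*} (a : α) (ρ : ℕ → α) (n : ℕ) :
    consEnv a ρ (n + 1) = ρ n := rfl

def interp : Ty → (ℕ → Set Trm) → Set Trm
  | .var n, ρ => ρ n
  | .arr A B, ρ => {t | ∀ a ∈ interp A ρ, .app t a ∈ interp B ρ}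
  | .all A, ρ => {t | ∀ S, Saturated S → t ∈ interp A (consEnv S ρ)}

theorem saturated_interp (A : Ty) {ρ : ℕ → Set Trm} (hρ : ∀ n, Saturated (ρ n)) :
    Saturated (interp A ρ) := by
  induction A generalizing ρ with
  | var n => exact hρ n
  | arr A B _ ihB => exact fun u v huv hv a ha => ihB hρ huv.appL (hv a ha)
  | all A ih =>
    refine fun u v huv hv S hS => ih (fun n => ?_) huv (hv S hS)
    cases n
    exacts [hS, hρ _]

theorem interp_tlift (A : Ty) (d : ℕ) (ρ : ℕ → Set Trm) :
    interp (A.tlift d) ρ = interp A (fun n => ρ (if n < d then n else n + 1)) := by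
  induction A generalizing d ρ with
  | var n => by_cases h : n < d <;> simp [Ty.tlift, interp, h]
  | arr A B ihA ihB => simp only [Ty.tlift, interp, ihA, ihB]
  | all A ih =>
    simp only [Ty.tlift, interp, ih]
    have henv : ∀ S, (fun n => consEnv S ρ (if n < d + 1 then n else n + 1))
        = consEnv S (fun n => ρ (if n < d then n else n + 1)) := by
      intro S
      funext n
      cases n with
      | zero => rfl
      | succ n => simp only [consEnv_succ]; split <;> split <;> first | rfl | omega
    simp only [henv]

theorem interp_tliftTimes (G : Ty) (k : ℕ) (ρ : ℕ → Set Trm) :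
    interp (G.tliftTimes k) ρ = interp G (fun m => ρ (m + k)) := by
  induction k generalizing ρ with
  | zero => rfl
  | succ k ih =>
    rw [Ty.tliftTimes, Function.iterate_succ_apply', ← Ty.tliftTimes, interp_tlift, ih]
    rfl

def tsubstEnv (k : ℕ) (G : Ty) (ρ : ℕ → Set Trm) (n : ℕ) : Set Trm :=
  if n < k then ρ n else if n = k then interp G (fun m => ρ (m + k)) else ρ (n - 1)

theorem tsubstEnv_succ (k : ℕ) (G : Ty) (S : Set Trm) (ρ : ℕ → Set Trm) :
    tsubstEnv (k + 1) G (consEnv S ρ) = consEnv S (tsubstEnv k G ρ) := by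
  funext n
  cases n with
  | zero => rfl
  | succ n =>
    simp only [tsubstEnv, consEnv_succ]
    rcases Nat.lt_trichotomy n k with h | rfl | h
    · simp [h]
    · simp only [lt_self_iff_false, ↓reduceIte]
      rfl
    · obtain ⟨n, rfl⟩ := Nat.exists_eq_add_of_lt h
      rw [if_neg (by omega), if_neg (by omega), if_neg (by omega), if_neg (by omega)]
      rfl

theorem interp_tsubst (A : Ty) (k : ℕ) (G : Ty) (ρ : ℕ → Set Trm) :
    interp (A.tsubst k G) ρ = interp A (tsubstEnv k G ρ) := by
  induction A generalizing k ρ with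
  | var n =>
    rcases Nat.lt_trichotomy n k with h | rfl | h
    · simp [Ty.tsubst, interp, tsubstEnv, h]
    · simpa [Ty.tsubst, interp, tsubstEnv] using interp_tliftTimes G n ρ
    · simp [Ty.tsubst, interp, tsubstEnv, h.not_gt, h.ne']
  | arr A B ihA ihB => simp only [Ty.tsubst, interp, ihA, ihB]
  | all A ih => simp only [Ty.tsubst, interp, ih, tsubstEnv_succ]

theorem subst_zero_ssub_upS (σ : ℕ → Trm) (u a : Trm) :
    ((Trm.ssub (Trm.upS σ) u).subst 0 a) = Trm.ssub (consEnv a σ) u := by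
  rw [Trm.subst_eq_ssub, Trm.ssub_ssub]
  apply Trm.ssub_congr_fv
  rintro (_ | n) _
  · rfl
  · simp only [Trm.upS, Trm.ssub_rename]
    exact Trm.ssub_var (σ n)

theorem Typing.ssub_mem_interp {Γ : List Ty} {t : Trm} {A : Ty} (h : Typing Γ t A)
    {ρ : ℕ → Set Trm} (hρ : ∀ n, Saturated (ρ n)) {σ : ℕ → Trm}
    (hσ : ∀ n B, Γ[n]? = some B → σ n ∈ interp B ρ) : t.ssub σ ∈ interp A ρ := by
  induction h generalizing ρ σ with
  | ax hget _ => exact hσ _ _ hget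
  | @arrI Γ A B t _ _ ih =>
    intro a ha
    refine saturated_interp B hρ .beta ?_
    rw [subst_zero_ssub_upS]
    refine ih hρ fun n B' hB' => ?_
    cases n with
    | zero => cases hB'; exact ha
    | succ n => exact hσ n B' hB'
  | arrE _ _ ihu ihv => exact ihu hρ hσ _ (ihv hρ hσ)
  | allI _ _ ih =>
    intro S hS
    refine ih (fun n => ?_) fun n B hB => ?_
    · cases n
      exacts [hS, hρ _]
    · rw [List.getElem?_map, Option.map_eq_some_iff] at hB
      obtain ⟨B₀, hB₀, rfl⟩ := hB
      rw [interp_tlift]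
      exact hσ n B₀ hB₀
  | allE G _ _ _ ih =>
    rw [interp_tsubst]
    have hmem := ih hρ hσ (interp G (fun m => ρ (m + 0)))
      (saturated_interp G fun m => hρ (m + 0))
    convert hmem using 2
    funext n
    cases n <;> rfl

theorem Typing.mem_interp_of_closed {t : Trm} {A : Ty} (h : Typing [] t A)
    {ρ : ℕ → Set Trm} (hρ : ∀ n, Saturated (ρ n)) : t ∈ interp A ρ := by
  simpa using h.ssub_mem_interp hρ (σ := Trm.var) (by simp)

namespace Trm

theorem mem_fv_lamN {k n : ℕ} {c : Trm} : n ∈ fv (lamN k c) ↔ n + k ∈ fv c := by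
  induction k generalizing n with
  | zero => rfl
  | succ k ih =>
    show n + 1 ∈ fv (lamN k c) ↔ _
    rw [ih, Nat.add_right_comm, Nat.add_assoc]

theorem closed_lamN_iff {k : ℕ} {c : Trm} : Closed (lamN k c) ↔ ∀ n ∈ fv c, n < k := by
  simp only [Closed, Set.eq_empty_iff_forall_notMem, mem_fv_lamN]
  refine ⟨fun h n hn => ?_, fun h n hn => by have := h _ hn; omega⟩
  by_contra hk
  exact h (n - k) (by rwa [Nat.sub_add_cancel (by omega)])

theorem fv_nonempty_of_betaNormal_app {u v : Trm} (h : BetaNormal (app u v)) :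
    (fv (app u v)).Nonempty := by
  induction u generalizing v with
  | var n => exact ⟨n, Or.inl rfl⟩
  | app a b ih => exact (ih (betaNormal_app_iff.1 h).1).mono Set.subset_union_left
  | lam a => exact absurd rfl ((betaNormal_app_iff.1 h).2.2 a)

theorem exists_eq_lam_of_closed {t : Trm} (hc : Closed t) (hn : BetaNormal t) :
    ∃ u, t = lam u := by
  cases t with
  | var n => exact absurd (hc ▸ rfl : n ∈ (∅ : Set ℕ)) (Set.notMem_empty n)
  | app u v =>
    obtain ⟨n, hn⟩ := fv_nonempty_of_betaNormal_app hn
    exact absurd (hc ▸ hn) (Set.notMem_empty n)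
  | lam u => exact ⟨u, rfl⟩

theorem rename_eq_var {r : ℕ → ℕ} {t : Trm} {n : ℕ} (h : rename r t = var n) :
    ∃ m, t = var m ∧ r m = n := by
  cases t with
  | var m => exact ⟨m, rfl, var.inj h⟩
  | app => cases h
  | lam => cases h

theorem rename_injective_of_injOn {r : ℕ → ℕ} {s t : Trm}
    (hr : ∀ m ∈ fv s, ∀ n ∈ fv t, r m = r n → m = n) (h : rename r s = rename r t) : s = t := by
  induction s generalizing r t with
  | var m =>
    obtain ⟨n, rfl, hn⟩ := rename_eq_var h.symm
    rw [hr m rfl n rfl hn.symm]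
  | app u v ihu ihv =>
    cases t with
    | app u' v' =>
      simp only [rename, app.injEq] at h
      rw [ihu (fun m hm n hn => hr m (Or.inl hm) n (Or.inl hn)) h.1,
        ihv (fun m hm n hn => hr m (Or.inr hm) n (Or.inr hn)) h.2]
    | var => cases h
    | lam => cases h
  | lam u ih =>
    cases t with
    | lam u' =>
      simp only [rename, lam.injEq] at h
      refine congrArg lam (ih (fun m hm n hn hmn => ?_) h)
      cases m <;> cases n <;> simp only [upR, Nat.add_right_cancel_iff, reduceCtorEq] at hmn
      · rfl
      · exact congrArg (· + 1) (hr _ hm _ hn hmn)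
    | var => cases h
    | app => cases h

theorem lift_zero_ne_var_zero (s : Trm) : lift 0 s ≠ var 0 := by
  cases s <;> simp [lift]

end Trm

open Trm

theorem betaEtaNormal_var (n : ℕ) : BetaEtaNormal (var n) :=
  fun _ => ⟨(nomatch ·), (nomatch ·)⟩

theorem betaEtaNormal_app {u v : Trm} (hu : BetaEtaNormal u) (hv : BetaEtaNormal v)
    (hnl : ∀ w, u ≠ lam w) : BetaEtaNormal (app u v) := by
  refine fun s => ⟨fun h => ?_, fun h => ?_⟩
  · cases h with
    | beta => exact hnl _ rfl
    | appL h => exact (hu _).1 h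
    | appR h => exact (hv _).1 h
  · cases h with
    | appL h => exact (hu _).2 h
    | appR h => exact (hv _).2 h

theorem betaEtaNormal_lam {u : Trm} (hu : BetaEtaNormal u)
    (hη : ∀ s, u ≠ app (lift 0 s) (var 0)) : BetaEtaNormal (lam u) := by
  refine fun s => ⟨fun h => ?_, fun h => ?_⟩
  · cases h with
    | lam h => exact (hu _).1 h
  · cases h with
    | eta => exact hη _ rfl
    | lam h => exact (hu _).2 h

/-- `altApp a b e n` is `[(a)(b)]ⁿ e`. -/
def altApp (a b : ℕ) (e : Trm) : ℕ → Trm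
  | 0 => e
  | n + 1 => app (var a) (app (var b) (altApp a b e n))

theorem chainBody_eq_altApp (x y z n : ℕ) :
    chainBody x y z n = altApp x y (app (var z) (var 0)) n := by
  induction n with
  | zero => rfl
  | succ n ih => rw [chainBody, ih]; rfl

theorem app_var_altApp (a b : ℕ) (e : Trm) (n : ℕ) :
    app (var a) (altApp b a e n) = altApp a b (app (var a) e) n := by
  induction n with
  | zero => rfl
  | succ n ih => rw [altApp, ih]; rfl

theorem rename_altApp (r : ℕ → ℕ) (a b : ℕ) (e : Trm) (n : ℕ) :
    rename r (altApp a b e n) = altApp (r a) (r b) (rename r e) n := by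
  induction n with
  | zero => rfl
  | succ n ih => simp [altApp, ih]

theorem betaNormal_altApp {a b : ℕ} {e : Trm} (he : BetaNormal e) (n : ℕ) :
    BetaNormal (altApp a b e n) := by
  induction n with
  | zero => exact he
  | succ n ih =>
    exact betaNormal_app_iff.2 ⟨betaNormal_var a,
      betaNormal_app_iff.2 ⟨betaNormal_var b, ih, by simp⟩, by simp⟩

def evenWords (a b e : ℕ) : Set Trm := {t | ∃ n, BetaStar t (altApp b a (var e) n)}

def oddWords (a b e : ℕ) : Set Trm := {t | ∃ n, BetaStar t (app (var a) (altApp b a (var e) n))}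

section Words

variable {a b e : ℕ}

theorem saturated_evenWords : Saturated (evenWords a b e) :=
  fun _ _ huv ⟨n, hn⟩ => ⟨n, .head huv hn⟩

theorem saturated_oddWords : Saturated (oddWords a b e) :=
  fun _ _ huv ⟨n, hn⟩ => ⟨n, .head huv hn⟩

theorem var_mem_evenWords : var e ∈ evenWords a b e := ⟨0, .refl⟩

theorem app_var_mem_oddWords {s : Trm} (hs : s ∈ evenWords a b e) :
    app (var a) s ∈ oddWords a b e :=
  let ⟨n, hn⟩ := hs
  ⟨n, hn.appR⟩

theorem app_var_mem_evenWords {s : Trm} (hs : s ∈ oddWords a b e) :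
    app (var b) s ∈ evenWords a b e :=
  let ⟨n, hn⟩ := hs
  ⟨n + 1, hn.appR⟩

end Words

/-- For `n = 0` the second alternative is the η-redex `λu (a)u`. -/
def IsComponent (a b : ℕ) (H : Trm) : Prop :=
  H = var a ∨ ∃ n, H = lam (chainBody (a + 1) (b + 1) (a + 1) n)

theorem mem_fv_chainBody {x y z n m : ℕ} (h : m ∈ fv (chainBody x y z n)) :
    m = x ∨ m = y ∨ m = z ∨ m = 0 := by
  induction n with
  | zero =>
    simp only [chainBody, fv, Set.mem_union, Set.mem_singleton_iff] at h
    tauto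
  | succ n ih =>
    simp only [chainBody, fv, Set.mem_union, Set.mem_singleton_iff] at h
    rcases h with h | h | h
    exacts [Or.inl h, Or.inr (Or.inl h), ih h]

/-- The first argument `(var 3)` plays the role of a fresh variable `z`; substituting it for `u`
is a renaming that is injective on the variables at hand. -/
theorem IsComponent.of_betaStar {a b n : ℕ} (ha : a < 3) (hb : b < 3) {H : Trm}
    (hH : BetaNormal H) (hfv : ∀ m ∈ fv H, m < 3)
    (h : BetaStar (app H (var 3)) (app (var a) (altApp b a (var 3) n))) : IsComponent a b H := by
  cases H with
  | var m =>
    have := (betaNormal_app_iff.2 ⟨hH, betaNormal_var 3, by simp⟩).eq_of_betaStar h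
    simp only [app.injEq, var.injEq] at this
    exact Or.inl (congrArg var this.1.symm)
  | app u v =>
    have := (betaNormal_app_iff.2 ⟨hH, betaNormal_var 3, by simp⟩).eq_of_betaStar h
    simp at this
  | lam d =>
    refine Or.inr ⟨n, congrArg lam ?_⟩
    have hred := BetaStar.to_normal (.single .beta) h
      (betaNormal_app_iff.2 ⟨betaNormal_var a, betaNormal_altApp (betaNormal_var 3) n, by simp⟩)
    have hd := (betaNormal_subst_var (betaNormal_lam_iff.1 hH) 0 3).eq_of_betaStar hred
    rw [subst_var_eq_rename] at hd
    have hchain : rename (fun m => if m < 0 then m else if m = 0 then 3 + 0 else m - 1)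
        (chainBody (a + 1) (b + 1) (a + 1) n) = app (var a) (altApp b a (var 3) n) := by
      rw [chainBody_eq_altApp, rename_altApp, app_var_altApp]
      simp
    refine rename_injective_of_injOn (fun m hm k hk hmk => ?_) (hd.symm.trans hchain.symm)
    have hm4 : m < 4 := by
      rcases m with _ | m
      · omega
      · have := hfv m hm; omega
    have hk4 : k < 4 := by rcases mem_fv_chainBody hk with h | h | h | h <;> omega
    split_ifs at hmk <;> omega

theorem IsComponent.of_realizer {a b : ℕ} (ha : a < 3) (hb : b < 3) {f H : Trm}
    (hfH : BetaStar f H) (hH : BetaNormal H) (hfv : ∀ m ∈ fv H, m < 3)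
    (hf : ∀ s ∈ evenWords a b 3, app f s ∈ oddWords a b 3) : IsComponent a b H := by
  obtain ⟨n, hn⟩ := hf _ var_mem_evenWords
  refine .of_betaStar ha hb hH hfv (hfH.appL.to_normal hn ?_)
  exact betaNormal_app_iff.2 ⟨betaNormal_var a, betaNormal_altApp (betaNormal_var 3) n, by simp⟩

/-- `var 2`, `var 1`, `var 0` stand for `x`, `y`, `p`. The witnesses come from interpreting the
conjunction's type variable by the terms reducing to some `(p)f g` with `f`, `g` realizers. -/
theorem exists_realizers_of_mem_interp {t : Trm} {ρ : ℕ → Set Trm} (ht : t ∈ interp Binf ρ)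
    {X Y : Set Trm} (hX : Saturated X) (hY : Saturated Y)
    (hx : ∀ s ∈ X, app (var 2) s ∈ Y) (hy : ∀ s ∈ Y, app (var 1) s ∈ X) :
    ∃ f g, (∀ s ∈ X, app f s ∈ Y) ∧ (∀ s ∈ Y, app g s ∈ X) ∧
      BetaStar (apps t [var 2, var 1, var 0]) (app (app (var 0) f) g) := by
  let U : Set Trm := {u | ∃ f g, (∀ s ∈ X, app f s ∈ Y) ∧ (∀ s ∈ Y, app g s ∈ X) ∧
    BetaStar u (app (app (var 0) f) g)}
  have hU : Saturated U := fun _ _ huv ⟨f, g, hf, hg, hv⟩ => ⟨f, g, hf, hg, .head huv hv⟩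
  exact ht X hX Y hY (var 2) hx (var 1) hy U hU (var 0) fun f hf g hg => ⟨f, g, hf, hg, .refl⟩

theorem betaStar_apps_lam3 {c : Trm} (hc : ∀ n ∈ fv c, n < 3) :
    BetaStar (apps (lam (lam (lam c))) [var 2, var 1, var 0]) c := by
  have h : BetaStar (apps (lam (lam (lam c))) [var 2, var 1, var 0])
      (((c.subst 2 (var 2)).subst 1 (var 1)).subst 0 (var 0)) :=
    .head (.appL (.appL .beta)) (.head (.appL .beta) (.single .beta))
  simp only [subst_var_eq_rename, rename_rename] at h
  rwa [rename_eq_self] at h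
  intro n hn
  have := hc n hn
  interval_cases n <;> rfl

/-- With at most two leading abstractions, the β-normal form of `t x y p` would have head `x` or
`y`, not `p`. -/
theorem exists_eq_lam3 {t f g : Trm} (hc : Closed t) (hn : BetaNormal t)
    (h : BetaStar (apps t [var 2, var 1, var 0]) (app (app (var 0) f) g)) :
    ∃ c, t = lam (lam (lam c)) := by
  have head : ∀ {N}, BetaStar (apps t [var 2, var 1, var 0]) N → BetaNormal N →
      ∃ f' g', N = app (app (var 0) f') g' := fun hN hNn =>
    let ⟨f', g', e, _⟩ := (h.to_normal hN hNn).eq_app_app_var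
    ⟨f', g', e⟩
  obtain ⟨a, rfl⟩ := exists_eq_lam_of_closed hc hn
  have ha := betaNormal_lam_iff.1 hn
  have head₁ (hnl : ∀ w, a.subst 0 (var 2) ≠ lam w) :
      ∃ f' g', app (app (a.subst 0 (var 2)) (var 1)) (var 0) = app (app (var 0) f') g' :=
    head (.single (.appL (.appL .beta))) (betaNormal_app_iff.2 ⟨betaNormal_app_iff.2
      ⟨betaNormal_subst_var ha 0 2, betaNormal_var 1, hnl⟩, betaNormal_var 0, by simp⟩)
  cases a with
  | var m =>
    have hm : m < 1 := closed_lamN_iff (k := 1) |>.1 hc m rfl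
    obtain ⟨f', g', e⟩ := head₁ (by simp [subst_var_eq_rename])
    simp only [subst_var_eq_rename, rename, app.injEq, var.injEq] at e
    split_ifs at e <;> omega
  | app u v =>
    obtain ⟨f', g', e⟩ := head₁ (by simp [subst])
    simp [subst] at e
  | lam b =>
    have hb := betaNormal_lam_iff.1 ha
    have head₂ (hnl : ∀ w, (b.subst 1 (var 2)).subst 0 (var 1) ≠ lam w) :
        ∃ f' g', app ((b.subst 1 (var 2)).subst 0 (var 1)) (var 0) = app (app (var 0) f') g' :=
      head (.head (.appL (.appL .beta)) (.single (.appL .beta))) (betaNormal_app_iff.2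
        ⟨betaNormal_subst_var (betaNormal_subst_var hb 1 2) 0 1, betaNormal_var 0, hnl⟩)
    cases b with
    | var m =>
      obtain ⟨f', g', e⟩ := head₂ (by simp [subst_var_eq_rename])
      simp [subst_var_eq_rename] at e
    | app u v =>
      obtain ⟨f', g', e⟩ := head₂ (by simp [subst])
      simp only [subst_var_eq_rename, rename, rename_rename, app.injEq] at e
      obtain ⟨m, rfl, hm⟩ := rename_eq_var e.1.1
      have : m < 2 := closed_lamN_iff (k := 2) |>.1 hc m (Or.inl rfl)
      simp only [Function.comp_apply] at hm
      split_ifs at hm <;> omega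
    | lam c => exact ⟨c, rfl⟩

theorem exists_realizers_of_lam3 {F G : Trm} {ρ : ℕ → Set Trm}
    (ht : lam (lam (lam (app (app (var 0) F) G))) ∈ interp Binf ρ)
    (hfv : ∀ n ∈ fv (app (app (var 0) F) G), n < 3) (hn : BetaNormal (app (app (var 0) F) G))
    {X Y : Set Trm} (hX : Saturated X) (hY : Saturated Y)
    (hx : ∀ s ∈ X, app (var 2) s ∈ Y) (hy : ∀ s ∈ Y, app (var 1) s ∈ X) :
    ∃ f g, BetaStar f F ∧ BetaStar g G ∧ (∀ s ∈ X, app f s ∈ Y) ∧ (∀ s ∈ Y, app g s ∈ X) := by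
  obtain ⟨f, g, hf, hg, hfg⟩ := exists_realizers_of_mem_interp ht hX hY hx hy
  obtain ⟨F', G', e, hfF, hgG⟩ := (hfg.to_normal (betaStar_apps_lam3 hfv) hn).eq_app_app_var
  simp only [app.injEq] at e
  obtain ⟨⟨-, rfl⟩, rfl⟩ := e
  exact ⟨f, g, hfF, hgG, hf, hg⟩

theorem Typing.classify_Binf {t : Trm} (ht : Typing [] t Binf) (hc : Closed t)
    (hn : BetaNormal t) : ∃ F G, t = lam (lam (lam (app (app (var 0) F) G))) ∧
      IsComponent 2 1 F ∧ IsComponent 1 2 G := by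
  have hsem : t ∈ interp Binf fun _ => Set.univ :=
    ht.mem_interp_of_closed fun _ _ _ _ _ => trivial
  have huniv : Saturated Set.univ := fun _ _ _ _ => trivial
  obtain ⟨_, _, -, -, hfg⟩ :=
    exists_realizers_of_mem_interp hsem huniv huniv (fun _ _ => trivial) (fun _ _ => trivial)
  obtain ⟨c, rfl⟩ := exists_eq_lam3 hc hn hfg
  have hcfv : ∀ n ∈ fv c, n < 3 := closed_lamN_iff (k := 3) |>.1 hc
  have hcn : BetaNormal c := betaNormal_lam_iff.1 (betaNormal_lam_iff.1 (betaNormal_lam_iff.1 hn))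
  obtain ⟨F, G, rfl, -, -⟩ := (hfg.to_normal (betaStar_apps_lam3 hcfv) hcn).eq_app_app_var
  obtain ⟨⟨-, hFn, -⟩, hGn, -⟩ := And.imp_left betaNormal_app_iff.1 (betaNormal_app_iff.1 hcn)
  obtain ⟨f, -, hfF, -, hf, -⟩ := exists_realizers_of_lam3 hsem hcfv hcn
    (X := evenWords 2 1 3) (Y := oddWords 2 1 3) saturated_evenWords saturated_oddWords
    (fun _ => app_var_mem_oddWords) (fun _ => app_var_mem_evenWords)
  obtain ⟨-, g, -, hgG, -, hg⟩ := exists_realizers_of_lam3 hsem hcfv hcn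
    (X := oddWords 1 2 3) (Y := evenWords 1 2 3) saturated_oddWords saturated_evenWords
    (fun _ => app_var_mem_evenWords) (fun _ => app_var_mem_oddWords)
  exact ⟨F, G, rfl,
    .of_realizer (by norm_num) (by norm_num) hfF hFn (fun n hn => hcfv n (.inl (.inr hn))) hf,
    .of_realizer (by norm_num) (by norm_num) hgG hGn (fun n hn => hcfv n (.inr hn)) hg⟩

section Chains

variable {x y z : ℕ}

theorem isLI_chainBody (n : ℕ) : IsLI (chainBody x y z n) := by
  induction n with
  | zero => exact .app (.var z) (.var 0)
  | succ n ih => exact .app (.var x) (.app (.var y) ih)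

theorem zero_mem_fv_chainBody (n : ℕ) : 0 ∈ fv (chainBody x y z n) := by
  induction n with
  | zero => exact Or.inr rfl
  | succ n ih => exact Or.inr (Or.inr ih)

theorem mem_fv_chainBody_self (n : ℕ) : x ∈ fv (chainBody x y x n) := by
  cases n <;> exact Or.inl rfl

theorem chainBody_injective : Function.Injective (chainBody x y z) := by
  intro n n' h
  induction n generalizing n' with
  | zero => cases n' <;> simp_all [chainBody]
  | succ n ih =>
    cases n' with
    | zero => simp [chainBody] at h
    | succ n' => simp only [chainBody, app.injEq, true_and] at h; rw [ih h]

theorem betaEtaNormal_chainBody (n : ℕ) : BetaEtaNormal (chainBody x y z n) := by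
  induction n with
  | zero => exact betaEtaNormal_app (betaEtaNormal_var _) (betaEtaNormal_var _) (by simp)
  | succ n ih =>
    exact betaEtaNormal_app (betaEtaNormal_var _)
      (betaEtaNormal_app (betaEtaNormal_var _) ih (by simp)) (by simp)

theorem betaEtaNormal_chain (n : ℕ) : BetaEtaNormal (chain x y z n) := by
  cases n with
  | zero => exact betaEtaNormal_var z
  | succ n => exact betaEtaNormal_lam (betaEtaNormal_chainBody _) (by simp [chainBody])

theorem mem_fv_chain {n m : ℕ} (h : m ∈ fv (chain x y z n)) : m = x ∨ m = y ∨ m = z := by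
  cases n with
  | zero => exact Or.inr (Or.inr h)
  | succ n => rcases mem_fv_chainBody h with h | h | h | h <;> omega

theorem lift_zero_chain (n : ℕ) : lift 0 (chain x y z n) = chain (x + 1) (y + 1) (z + 1) n := by
  cases n with
  | zero => rfl
  | succ n =>
    simp only [chain, lift, lam.injEq]
    induction n <;> simp_all [chainBody, lift]

theorem typing_chainBody {Γ : List Ty} {A B : Ty} (hΓ : ∀ C ∈ Γ, C.Proper)
    (hx : Γ[x]? = some (.arr A B)) (hy : Γ[y]? = some (.arr B A)) (h0 : Γ[0]? = some A)
    (n : ℕ) : Typing Γ (chainBody x y x n) B := by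
  induction n with
  | zero => exact .arrE (.ax hx hΓ) (.ax h0 hΓ)
  | succ n ih => exact .arrE (.ax hx hΓ) (.arrE (.ax hy hΓ) ih)

theorem typing_chain {Γ : List Ty} {A B : Ty} (hΓ : ∀ C ∈ Γ, C.Proper) (hA : A.Proper)
    (hx : Γ[x]? = some (.arr A B)) (hy : Γ[y]? = some (.arr B A)) (n : ℕ) :
    Typing Γ (chain x y x n) (.arr A B) := by
  cases n with
  | zero => exact .ax hx hΓ
  | succ n =>
    exact .arrI hA (typing_chainBody (List.forall_mem_cons.2 ⟨hA, hΓ⟩) (by simpa using hx)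
      (by simpa using hy) rfl _)

end Chains

theorem IsComponent.exists_eq_chain {a b : ℕ} {H : Trm} (h : IsComponent a b H)
    (hη : ∀ s, ¬ Eta H s) : ∃ n, H = chain a b a n := by
  rcases h with rfl | ⟨_ | n, rfl⟩
  · exact ⟨0, rfl⟩
  · exact absurd (Eta.eta (var a)) (hη _)
  · exact ⟨n + 1, rfl⟩

theorem IsComponent.isLI {a b : ℕ} {H : Trm} (h : IsComponent a b H) : IsLI H ∧ a ∈ fv H := by
  rcases h with rfl | ⟨n, rfl⟩
  · exact ⟨.var a, rfl⟩
  · exact ⟨.lam (isLI_chainBody n) (zero_mem_fv_chainBody n), mem_fv_chainBody_self n⟩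

theorem isLI_of_isComponent {F G : Trm} (hF : IsComponent 2 1 F) (hG : IsComponent 1 2 G) :
    IsLI (lam (lam (lam (app (app (var 0) F) G)))) := by
  obtain ⟨hFI, hF2⟩ := hF.isLI
  obtain ⟨hGI, hG1⟩ := hG.isLI
  exact .lam (.lam (.lam (.app (.app (.var 0) hFI) hGI) (.inl (.inl rfl))) (.inr hG1))
    (.inl (.inr hF2))

theorem Tij_eq (i j : ℕ) :
    Tij i j = lam (lam (lam (app (app (var 0) (chain 2 1 2 i)) (chain 1 2 1 j)))) := by
  simp only [Tij, tuple, List.map, apps, lift_zero_chain]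

theorem Tij_injective_left : Function.Injective fun i => Tij i 0 := by
  intro i i' h
  simp only [Tij_eq, lam.injEq, app.injEq, and_true, true_and] at h
  cases i <;> cases i' <;> simp_all [chain, chainBody_injective.eq_iff]

theorem betaEtaNormal_Tij (i j : ℕ) : BetaEtaNormal (Tij i j) := by
  rw [Tij_eq]
  refine betaEtaNormal_lam (betaEtaNormal_lam (betaEtaNormal_lam ?_ ?_) (by simp))
    (by simp)
  · exact betaEtaNormal_app (betaEtaNormal_app (betaEtaNormal_var 0) (betaEtaNormal_chain i)
      (by simp)) (betaEtaNormal_chain j) (by simp)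
  · intro s h
    obtain ⟨h, -⟩ := app.inj h
    cases s with
    | app s₁ _ =>
      simp only [lift, app.injEq] at h
      exact lift_zero_ne_var_zero s₁ h.1.symm
    | var m => simp [lift] at h
    | lam => simp [lift] at h

theorem closed_Tij (i j : ℕ) : Closed (Tij i j) := by
  rw [Tij_eq]
  refine closed_lamN_iff (k := 3) |>.2 fun n hn => ?_
  rcases hn with (hn | hn) | hn
  · exact hn ▸ Nat.zero_lt_succ _
  · rcases mem_fv_chain hn with h | h | h <;> omega
  · rcases mem_fv_chain hn with h | h | h <;> omega

theorem typing_Tij (i j : ℕ) : Typing [] (Tij i j) Binf := by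
  rw [Tij_eq]
  have hΓ : ∀ C ∈ [Ty.arr (.arr (.var 2) (.var 1)) (.arr (.arr (.var 1) (.var 2)) (.var 0)),
      .arr (.var 1) (.var 2), .arr (.var 2) (.var 1)], C.Proper := by
    simp [Ty.Proper]
  refine .allI (by simp [allN, arrList, conjN, Ty.tfv]) (.allI (by simp [allN, arrList, Ty.tfv])
    (.arrI (by simp [Ty.Proper]) (.arrI (by simp [Ty.Proper])
      (.allI (by simp [Ty.tfv]) (.arrI (by simp [arrList, Ty.tlift, Ty.Proper]) ?_)))))
  exact .arrE (.arrE (.ax rfl hΓ) (typing_chain hΓ (by trivial) rfl rfl i))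
    (typing_chain hΓ (by trivial) rfl rfl j)

theorem Tij_mem_Lam (i j : ℕ) : Tij i j ∈ Lam Binf :=
  ⟨betaEtaNormal_Tij i j, closed_Tij i j, typing_Tij i j⟩

theorem closedTy_Binf : Binf.ClosedTy := by
  ext n
  simp [Binf, allN, arrList, conjN, Ty.tfv, Ty.tlift]

theorem iType_Binf : IType Binf := by
  refine ⟨closedTy_Binf, fun t hn hc ht => ?_⟩
  obtain ⟨F, G, rfl, hF, hG⟩ := ht.classify_Binf hc hn
  exact isLI_of_isComponent hF hG

theorem Lam_Binf_eq : Lam Binf = {t | ∃ i j : ℕ, t = Tij i j} := by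
  ext t
  refine ⟨fun ⟨hbe, hc, ht⟩ => ?_, fun ⟨i, j, e⟩ => e ▸ Tij_mem_Lam i j⟩
  obtain ⟨F, G, rfl, hF, hG⟩ := ht.classify_Binf hc fun u => (hbe u).1
  obtain ⟨i, rfl⟩ := hF.exists_eq_chain fun s h => (hbe _).2 (.lam (.lam (.lam (.appL (.appR h)))))
  obtain ⟨j, rfl⟩ := hG.exists_eq_chain fun s h => (hbe _).2 (.lam (.lam (.lam (.appR h))))
  exact ⟨i, j, (Tij_eq i j).symm⟩

/-- B_∞ is an infinite I-type, and Λ(B_∞) = {T_{i,j} : i, j ∈ ℕ}. -/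
theorem stmt17 :
    IType Binf ∧ (Lam Binf).Infinite ∧
      Lam Binf = {t | ∃ i j : ℕ, t = Tij i j} :=
  ⟨iType_Binf, Set.infinite_of_injective_forall_mem Tij_injective_left fun i => Tij_mem_Lam i 0,
    Lam_Binf_eq⟩
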